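/- Let c = Σ_{k≥0} k! x1^k be the Ferfera series. Then for every nonempty word η = x_{i1} ⋯ x_{il} ∈ X*, (S a_η)(−c) = (−1)^{|η|−1} (Θ̂′_η (a_∅))(−c), where Θ̂′_η := θ̂′_{il} ∘ ⋯ ∘ θ̂′_{i1} with θ̂′_1 := −θ̃_1 and θ̂′_0 := κ_∅ ∘ θ̃_1; in particular the value (S a_η)(−c) depends only on coordinate functions of the form a_{x1^n} and a_∅. -/

import Mathlib

open scoped TensorProduct

noncomputable section

namespace Paper

/-- Words over the alphabet `X = {x0, x1}`, encoded as lists over `Fin 2`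
(`0` stands for the letter `x0` and `1` for the letter `x1`). -/
abbrev Word : Type := List (Fin 2)

/-- Formal power series `ℝ⟨⟨X⟩⟩`, given by their coefficient functions `η ↦ ⟨c,η⟩`. -/
abbrev Series : Type := Word → ℝ

/-- The left shift `x_i⁻¹(c)`. -/
def lshift (i : Fin 2) (c : Series) : Series := fun w => c (i :: w)

/-- Left concatenation `x_i c` of the letter `x_i` onto every word of `c`. -/
def lconcat (i : Fin 2) (c : Series) : Series := fun w =>
  match w with
  | [] => 0
  | j :: v => if j = i then c v else 0

/-- Right concatenation `p x_i` of the letter `x_i` onto every word of `p`. -/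
def rconcat {R : Type*} [Zero R] (i : Fin 2) (p : Word → R) : Word → R := fun w =>
  if w.getLast? = some i then p w.dropLast else 0

/-- The series of a single word. -/
def ind (η : Word) : Series := fun w => if w = η then 1 else 0

/-- The empty word as a series, the unit `∅` (often written `1`). -/
def one : Series := ind []

/-- The shuffle product, defined coefficientwise by the recursion
`⟨c ⧢ d, ∅⟩ = ⟨c,∅⟩⟨d,∅⟩` and `⟨c ⧢ d, x_i w⟩ = ⟨x_i⁻¹(c) ⧢ d, w⟩ + ⟨c ⧢ x_i⁻¹(d), w⟩`,
which is the bilinear (and ultrametrically continuous) extension of the recursive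
shuffle product of words. -/
def shuffleFn : Series → Series → Word → ℝ
  | c, d, [] => c [] * d []
  | c, d, i :: w => shuffleFn (lshift i c) d w + shuffleFn c (lshift i d) w

/-- The shuffle product on `ℝ⟨⟨X⟩⟩`. -/
def sh (c d : Series) : Series := shuffleFn c d

/-- The map `φ_d(x_i)` for the modified composition product:
`φ_d(x0)(e) = x0 e` and `φ_d(x1)(e) = x1 e + x0 (d ⧢ e)`. -/
def phiLetter (d : Series) (i : Fin 2) (e : Series) : Series :=
  if i = 0 then lconcat 0 e else lconcat 1 e + lconcat 0 (sh d e)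

/-- `φ_d(η)`, the algebra-homomorphism extension determined by
`φ_d(x_i η) = φ_d(x_i) ∘ φ_d(η)` and `φ_d(∅) = id`. -/
def phi (d : Series) : Word → Series → Series
  | [], e => e
  | i :: η, e => phiLetter d i (phi d η e)

/-- The modified composition product `c ∘̃ d = Σ_η ⟨c,η⟩ φ_d(η)(1)`. -/
def mcomp (c d : Series) : Series := fun w => ∑' η : Word, c η * phi d η one w

/-- The map `ψ_d(x_i)` for the composition product:
`ψ_d(x0)(e) = x0 e` and `ψ_d(x1)(e) = x0 (d ⧢ e)`. -/
def psiLetter (d : Series) (i : Fin 2) (e : Series) : Series :=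
  if i = 0 then lconcat 0 e else lconcat 0 (sh d e)

/-- `ψ_d(η)`, determined by `ψ_d(x_i η) = ψ_d(x_i) ∘ ψ_d(η)` and `ψ_d(∅) = id`. -/
def psi (d : Series) : Word → Series → Series
  | [], e => e
  | i :: η, e => psiLetter d i (psi d η e)

/-- The composition product `c ∘ d = Σ_η ⟨c,η⟩ ψ_d(η)(1)`. -/
def comp (c d : Series) : Series := fun w => ∑' η : Word, c η * psi d η one w

/-- The group operation on `ℝ⟨⟨X_δ⟩⟩ = {δ + c}`, transported to the `c`-parts:
`c_δ ∘ d_δ = δ + (d + c ∘̃ d)`. -/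
def gop (c d : Series) : Series := d + mcomp c d

/-- The Ferfera series `c = Σ_{k ≥ 0} k! x1^k`. -/
def ferfera : Series := fun w =>
  if w = List.replicate w.length (1 : Fin 2) then (Nat.factorial w.length : ℝ) else 0

/-- The degree of a word, `deg(η) = 2|η|_{x0} + |η|_{x1} + 1`. -/
def degW (η : Word) : ℕ := 2 * η.count 0 + η.count 1 + 1

/-- The output feedback Hopf algebra `H`: the free unital commutative `ℝ`-algebra on the
coordinate functions `a_η`, realized as polynomials in commuting variables indexed by words. -/
abbrev H : Type := MvPolynomial Word ℝ

/-- The coordinate function `a_η`. -/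
def aw (η : Word) : H := MvPolynomial.X η

/-- Character (pointwise) evaluation of elements of `H` at a series `c`:
`(a_{η₁} ⋯ a_{η_l})(c) = ⟨c,η₁⟩ ⋯ ⟨c,η_l⟩`, extended as an algebra map. -/
def evalS (c : Series) : H →ₐ[ℝ] ℝ := MvPolynomial.aeval c

/-- Evaluation of `H ⊗ H` at a pair of series: `(p ⊗ q)(c,d) = p(c) q(d)`. -/
def evalPair (c d : Series) : H ⊗[ℝ] H →ₗ[ℝ] ℝ :=
  (LinearMap.mul' ℝ ℝ).comp (TensorProduct.map (evalS c).toLinearMap (evalS d).toLinearMap)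

/-- The counit `ε` of `H`: `ε(a_η) = 0`, `ε(1) = 1`. -/
def counit : H →ₐ[ℝ] ℝ := evalS 0

/-- The defining property of the full coproduct `Δ` of the output feedback Hopf algebra:
`Δ a_η = Δ̃ a_η + 1 ⊗ a_η` where `Δ̃ a_η (c,d) = ⟨c ∘̃ d, η⟩`, i.e.
`(Δ a_η)(c,d) = ⟨c ∘̃ d, η⟩ + ⟨d, η⟩` for all series `c, d`; `Δ` is an algebra morphism. -/
def IsFBCoproduct (Δ : H →ₐ[ℝ] (H ⊗[ℝ] H)) : Prop :=
  ∀ (η : Word) (c d : Series), evalPair c d (Δ (aw η)) = mcomp c d η + d η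

/-- `S` is an antipode for the coproduct `Δ` (with counit `ε`):
`μ ∘ (S ⊗ id) ∘ Δ = 1·ε = μ ∘ (id ⊗ S) ∘ Δ`. -/
def IsAntipode (Δ : H →ₐ[ℝ] (H ⊗[ℝ] H)) (S : H →ₗ[ℝ] H) : Prop :=
  (∀ p : H, LinearMap.mul' ℝ H (TensorProduct.map S LinearMap.id (Δ p)) = counit p • 1) ∧
  (∀ p : H, LinearMap.mul' ℝ H (TensorProduct.map LinearMap.id S (Δ p)) = counit p • 1)

/-- The right-augmentation operator `θ̃_i`, the derivation on `H` with `θ̃_i(a_η) = a_{η x_i}`. -/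
def thetaR (i : Fin 2) : Derivation ℝ H H :=
  MvPolynomial.mkDerivation ℝ fun η => aw (η ++ [i])

/-- The left-augmentation operator `θ_i`, the derivation on `H` with `θ_i(a_η) = a_{x_i η}`. -/
def thetaL (i : Fin 2) : Derivation ℝ H H :=
  MvPolynomial.mkDerivation ℝ fun η => aw (i :: η)

/-- The multiplication operator `κ_∅(h) = h · a_∅`. -/
def kappaE : H →ₗ[ℝ] H := LinearMap.mulRight ℝ (aw [])

/-- The shuffle coefficient `⟨ξ ⧢ ν, η⟩`. -/
def shCoeff (ξ ν η : Word) : ℝ := sh (ind ξ) (ind ν) η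

/-- The finite set of words of length `n`. -/
def wordsLen (n : ℕ) : Finset Word :=
  (Finset.univ : Finset (Fin n → Fin 2)).image List.ofFn

/-- The deshuffle coproduct `Δ_⧢ a_η = Σ_{ξ,ν} ⟨ξ ⧢ ν, η⟩ a_ξ ⊗ a_ν`
(the unique coproduct satisfying `Δ_⧢ a_∅ = a_∅ ⊗ a_∅` and the coderivation recursions
with respect to the augmentation operators). -/
def deshuffle (η : Word) : H ⊗[ℝ] H :=
  ∑ k ∈ Finset.range (η.length + 1), ∑ ξ ∈ wordsLen k, ∑ ν ∈ wordsLen (η.length - k),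
    shCoeff ξ ν η • (aw ξ ⊗ₜ[ℝ] aw ν)

/-- Iterated integrals: `E_∅[u](t) = 1`, `E_{x_i η}[u](t) = ∫₀ᵗ u_i(s) E_η[u](s) ds`. -/
def E (u : Fin 2 → ℝ → ℝ) : Word → ℝ → ℝ
  | [], _ => 1
  | i :: η, t => ∫ s in (0:ℝ)..t, u i s * E u η s

end Paper

namespace Paper

/-- The operator `θ̂′_i` on `H`: `θ̂′_1 := −θ̃_1` and `θ̂′_0 := κ_∅ ∘ θ̃_1`. -/
def thetaHat (i : Fin 2) : H →ₗ[ℝ] H :=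
  if i = 0 then kappaE ∘ₗ (thetaR 1).toLinearMap
  else -(thetaR 1).toLinearMap

/-- `Θ̂′_η := θ̂′_{i_l} ∘ ⋯ ∘ θ̂′_{i_1}` for `η = x_{i_1} ⋯ x_{i_l}`. -/
def thetaHatWord : Word → (H →ₗ[ℝ] H)
  | [] => LinearMap.id
  | i :: η => thetaHatWord η ∘ₗ thetaHat i

end Paper

/-!
Write `d = -c`. Evaluating the left antipode identity for `a_η` at `d` shows that
`F(ξ) = (S a_ξ)(d)` solves `F ∘̃ d = -d`; for this, `Δ a_η` is recovered from its values at pairs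
of series because `H ⊗ H` is a polynomial ring over the infinite field `ℝ`. Since `φ_d(ξ)(1)` is
unitriangular with respect to the degree `degW`, right composition with `d` is injective, so it
suffices to find one solution. For every `d` supported on the powers of `x1`, the series
`G_p = Σ_ξ (-1)^|ξ| (Θ̂′_ξ p)(d) ξ` satisfies `G_p ∘̃ d = Σₙ (θ̃₁ⁿ p)(d) x1ⁿ`: both sides obey the
recursion of `∘̃` in the first letter, because multiplication by `a_∅` turns into shuffling with
`d` (Leibniz' rule for `θ̃₁ⁿ` is the binomial formula for shuffles of powers of `x1`).
At `p = a_∅` the right-hand side is `d` itself, so `-G_{a_∅}` is the solution.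
-/

theorem Derivation.iterate_leibniz {R A : Type*} [CommSemiring R] [CommSemiring A] [Algebra R A]
    (D : Derivation R A A) (n : ℕ) (a b : A) :
    (⇑D)^[n] (a * b) =
      ∑ i ∈ Finset.range (n + 1), n.choose i • ((⇑D)^[i] a * (⇑D)^[n - i] b) := by
  induction n with
  | zero => simp
  | succ n ih =>
    rw [Function.iterate_succ_apply', ih, map_sum,
      Finset.sum_choose_succ_nsmul (fun i j => (⇑D)^[i] a * (⇑D)^[j] b), ← Finset.sum_add_distrib]
    refine Finset.sum_congr rfl fun i hi => ?_
    rw [Finset.mem_range] at hi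
    rw [map_nsmul, D.leibniz, smul_eq_mul, smul_eq_mul, nsmul_add, add_comm, mul_comm,
      ← Function.iterate_succ_apply' D, ← Function.iterate_succ_apply' D,
      Nat.succ_sub (Nat.lt_succ_iff.1 hi), add_comm]

namespace Paper

open Finset TensorProduct

section Shuffle

lemma shuffleFn_eq_zero_of_sublist : ∀ (w : Word) (c e : Series),
    (∀ v, v.Sublist w → e v = 0) → shuffleFn c e w = 0
  | [], c, e, he => by simp [shuffleFn, he [] List.Sublist.slnil]
  | i :: w, c, e, he => by
      rw [shuffleFn, shuffleFn_eq_zero_of_sublist w _ e fun v hv => he v (hv.cons i),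
        shuffleFn_eq_zero_of_sublist w c (lshift i e) fun v hv => he (i :: v) (hv.cons_cons i),
        add_zero]

lemma shuffleFn_add_right : ∀ (w : Word) (c e e' : Series),
    shuffleFn c (e + e') w = shuffleFn c e w + shuffleFn c e' w
  | [], c, e, e' => by simp [shuffleFn, mul_add]
  | i :: w, c, e, e' => by
      simp only [shuffleFn]
      rw [shuffleFn_add_right w _ e e', show lshift i (e + e') = lshift i e + lshift i e' from rfl,
        shuffleFn_add_right w c]
      ring

lemma shuffleFn_smul_right : ∀ (w : Word) (c e : Series) (r : ℝ),
    shuffleFn c (r • e) w = r * shuffleFn c e w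
  | [], c, e, r => by simp [shuffleFn]; ring
  | i :: w, c, e, r => by
      simp only [shuffleFn]
      rw [shuffleFn_smul_right w _ e r, show lshift i (r • e) = r • lshift i e from rfl,
        shuffleFn_smul_right w c]
      ring

def shuffleFnRight (c : Series) (w : Word) : Series →ₗ[ℝ] ℝ where
  toFun e := shuffleFn c e w
  map_add' := shuffleFn_add_right w c
  map_smul' r e := shuffleFn_smul_right w c e r

lemma shuffleFnRight_apply (c e : Series) (w : Word) : shuffleFnRight c w e = shuffleFn c e w :=
  rfl

lemma shuffleFn_congr_right {w : Word} (c : Series) {e e' : Series}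
    (h : ∀ v, v.Sublist w → e v = e' v) : shuffleFn c e w = shuffleFn c e' w := by
  have := shuffleFn_eq_zero_of_sublist w c (e - e') fun v hv => sub_eq_zero.2 (h v hv)
  rwa [← shuffleFnRight_apply, map_sub, sub_eq_zero] at this

lemma shuffleFn_zero_left : ∀ (w : Word) (e : Series), shuffleFn 0 e w = 0
  | [], e => by simp [shuffleFn]
  | i :: w, e => by
      rw [shuffleFn, show lshift i (0 : Series) = 0 from rfl, shuffleFn_zero_left,
        shuffleFn_zero_left, add_zero]

lemma shuffleFn_eq_zero_of_zero_mem : ∀ (w : Word) (c e : Series),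
    (∀ v, (0 : Fin 2) ∈ v → c v = 0) → (∀ v, (0 : Fin 2) ∈ v → e v = 0) →
    (0 : Fin 2) ∈ w → shuffleFn c e w = 0
  | [], _, _, _, _, hw => absurd hw List.not_mem_nil
  | i :: w, c, e, hc, he, hw => by
      rw [shuffleFn]
      by_cases hi : i = 0
      · subst hi
        have hc0 : lshift 0 c = 0 := funext fun v => hc (0 :: v) List.mem_cons_self
        have he0 : lshift 0 e = 0 := funext fun v => he (0 :: v) List.mem_cons_self
        rw [hc0, he0, shuffleFn_zero_left, shuffleFn_eq_zero_of_sublist w c 0 fun _ _ => rfl,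
          add_zero]
      · have hw' : (0 : Fin 2) ∈ w := (List.mem_cons.1 hw).resolve_left (Ne.symm hi)
        rw [shuffleFn_eq_zero_of_zero_mem w (lshift i c) e
            (fun v hv => hc _ (List.mem_cons_of_mem i hv)) he hw',
          shuffleFn_eq_zero_of_zero_mem w c (lshift i e) hc
            (fun v hv => he _ (List.mem_cons_of_mem i hv)) hw', add_zero]

lemma shuffleFn_replicate_one : ∀ (n : ℕ) (a b : Series),
    shuffleFn a b (List.replicate n 1) =
      ∑ i ∈ range (n + 1), (n.choose i : ℝ) *
        (a (List.replicate i 1) * b (List.replicate (n - i) 1))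
  | 0, a, b => by simp [shuffleFn]
  | n + 1, a, b => by
      rw [List.replicate_succ, shuffleFn, shuffleFn_replicate_one n, shuffleFn_replicate_one n,
        Finset.sum_choose_succ_mul (fun i j => a (List.replicate i 1) * b (List.replicate j 1)),
        add_comm]
      congr 1
      refine Finset.sum_congr rfl fun i hi => ?_
      rw [Finset.mem_range] at hi
      simp only [lshift, ← List.replicate_succ, Nat.succ_sub (Nat.lt_succ_iff.1 hi)]

end Shuffle

def wordsUpTo : ℕ → Finset Word
  | 0 => {[]}
  | n + 1 => insert [] ((wordsUpTo n).map ⟨List.cons 0, List.cons_injective⟩ ∪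
      (wordsUpTo n).map ⟨List.cons 1, List.cons_injective⟩)

lemma mem_wordsUpTo : ∀ {n : ℕ} {ξ : Word}, ξ ∈ wordsUpTo n ↔ ξ.length ≤ n
  | 0, ξ => by simp [wordsUpTo]
  | n + 1, [] => by simp [wordsUpTo]
  | n + 1, 0 :: ξ => by simp [wordsUpTo, mem_wordsUpTo]
  | n + 1, 1 :: ξ => by simp [wordsUpTo, mem_wordsUpTo]

lemma sum_wordsUpTo_succ {M : Type*} [AddCommMonoid M] (f : Word → M) (n : ℕ) :
    ∑ ξ ∈ wordsUpTo (n + 1), f ξ =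
      f [] + ∑ ξ ∈ wordsUpTo n, f (0 :: ξ) + ∑ ξ ∈ wordsUpTo n, f (1 :: ξ) := by
  rw [wordsUpTo, sum_insert (by simp), sum_union, sum_map, sum_map, add_assoc]
  · rfl
  · simp [disjoint_left]

section Composition

variable (d : Series)

@[simp] lemma one_nil : one [] = 1 := rfl

@[simp] lemma one_cons (i : Fin 2) (w : Word) : one (i :: w) = 0 := by simp [one, ind]

@[simp] lemma phi_nil (e : Series) : phi d [] e = e := rfl

@[simp] lemma phi_cons_nil (i : Fin 2) (ξ : Word) (e : Series) : phi d (i :: ξ) e [] = 0 := by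
  fin_cases i <;> simp [phi, phiLetter, lconcat]

@[simp] lemma phi_zero_cons_zero (ξ : Word) (e : Series) (w : Word) :
    phi d (0 :: ξ) e (0 :: w) = phi d ξ e w := by
  simp [phi, phiLetter, lconcat]

@[simp] lemma phi_zero_cons_one (ξ : Word) (e : Series) (w : Word) :
    phi d (0 :: ξ) e (1 :: w) = 0 := by
  simp [phi, phiLetter, lconcat]

@[simp] lemma phi_one_cons_one (ξ : Word) (e : Series) (w : Word) :
    phi d (1 :: ξ) e (1 :: w) = phi d ξ e w := by
  simp [phi, phiLetter, lconcat]

@[simp] lemma phi_one_cons_zero (ξ : Word) (e : Series) (w : Word) :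
    phi d (1 :: ξ) e (0 :: w) = shuffleFn d (phi d ξ e) w := by
  simp [phi, phiLetter, lconcat, sh]

lemma phi_one_eq_zero_of_length_lt : ∀ (ξ w : Word), w.length < ξ.length → phi d ξ one w = 0
  | [], _, h => absurd h (Nat.not_lt_zero _)
  | _ :: _, [], _ => phi_cons_nil d _ _ _
  | 0 :: ξ, 0 :: w, h => by
      simpa using phi_one_eq_zero_of_length_lt ξ w (by simpa using h)
  | 0 :: ξ, 1 :: w, _ => phi_zero_cons_one d ξ one w
  | 1 :: ξ, 0 :: w, h => by
      simpa using shuffleFn_eq_zero_of_sublist w d _ fun v hv =>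
        phi_one_eq_zero_of_length_lt ξ v (hv.length_le.trans_lt (by simpa using h))
  | 1 :: ξ, 1 :: w, h => by
      simpa using phi_one_eq_zero_of_length_lt ξ w (by simpa using h)

lemma degW_cons_zero (w : Word) : degW (0 :: w) = degW w + 2 := by
  simp [degW]; ring

lemma degW_cons_one (w : Word) : degW (1 :: w) = degW w + 1 := by
  simp [degW]; ring

lemma degW_le_of_sublist {v w : Word} (h : v.Sublist w) : degW v ≤ degW w := by
  have h0 := h.count_le 0
  have h1 := h.count_le 1
  simp only [degW]
  omega

lemma phi_one_eq_ite_of_degW_le : ∀ (ξ w : Word), degW w ≤ degW ξ →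
    phi d ξ one w = if ξ = w then 1 else 0
  | [], w, h => by
      cases w with
      | nil => rfl
      | cons j w => simp
  | _ :: _, [], _ => by simp
  | 0 :: ξ, 0 :: w, h => by
      rw [degW_cons_zero, degW_cons_zero] at h
      simpa using phi_one_eq_ite_of_degW_le ξ w (by omega)
  | 0 :: ξ, 1 :: w, _ => by simp
  | 1 :: ξ, 0 :: w, h => by
      rw [degW_cons_zero, degW_cons_one] at h
      rw [phi_one_cons_zero, shuffleFn_eq_zero_of_sublist w d _ fun v hv => ?_]
      · simp
      have := degW_le_of_sublist hv
      rw [phi_one_eq_ite_of_degW_le ξ v (by omega), if_neg (by rintro rfl; omega)]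
  | 1 :: ξ, 1 :: w, h => by
      rw [degW_cons_one, degW_cons_one] at h
      simpa using phi_one_eq_ite_of_degW_le ξ w (by omega)

lemma phi_one_self (ξ : Word) : phi d ξ one ξ = 1 := by
  rw [phi_one_eq_ite_of_degW_le d ξ ξ le_rfl, if_pos rfl]

lemma mcomp_eq_sum {w : Word} {n : ℕ} (c : Series) (hn : w.length ≤ n) :
    mcomp c d w = ∑ ξ ∈ wordsUpTo n, c ξ * phi d ξ one w :=
  tsum_eq_sum fun ξ hξ => by
    rw [phi_one_eq_zero_of_length_lt d ξ w ((hn.trans_lt (not_le.1 (mem_wordsUpTo.not.1 hξ)))),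
      mul_zero]

lemma mcomp_neg_left (c : Series) : mcomp (-c) d = -mcomp c d :=
  funext fun w => by simp [mcomp_eq_sum d _ le_rfl (w := w), neg_mul, sum_neg_distrib]

lemma mcomp_nil (c : Series) : mcomp c d [] = c [] := by
  rw [mcomp_eq_sum d c (le_refl 0)]
  simp [wordsUpTo]

lemma mcomp_cons_one (c : Series) (w : Word) : mcomp c d (1 :: w) = mcomp (lshift 1 c) d w := by
  rw [mcomp_eq_sum d c (le_refl (w.length + 1)), sum_wordsUpTo_succ,
    mcomp_eq_sum d _ le_rfl]
  simp [lshift]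

lemma mcomp_cons_zero (c : Series) (w : Word) :
    mcomp c d (0 :: w) = mcomp (lshift 0 c) d w + shuffleFn d (mcomp (lshift 1 c) d) w := by
  rw [mcomp_eq_sum d c (le_refl (w.length + 1)), sum_wordsUpTo_succ,
    mcomp_eq_sum d _ le_rfl, shuffleFn_congr_right d fun v hv =>
      mcomp_eq_sum d (lshift 1 c) hv.length_le]
  simp only [phi_nil, one_cons, phi_zero_cons_zero, phi_one_cons_zero, mul_zero, zero_add, lshift]
  congr 1
  rw [← Finset.sum_fn, ← shuffleFnRight_apply, map_sum]
  exact sum_congr rfl fun ξ _ => (shuffleFn_smul_right w d _ _).symm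

lemma mcomp_left_injective : Function.Injective fun c => mcomp c d := by
  intro c c' h
  funext η
  induction hn : degW η using Nat.strong_induction_on generalizing η with
  | _ n ih =>
    have key := congrFun h η
    simp only [mcomp_eq_sum d _ le_rfl (w := η)] at key
    rw [← sub_eq_zero, ← sum_sub_distrib,
      sum_eq_single_of_mem η (mem_wordsUpTo.2 le_rfl) fun ξ _ hξ => ?_] at key
    · rwa [phi_one_self, ← sub_mul, mul_one, sub_eq_zero] at key
    by_cases hle : degW η ≤ degW ξ
    · rw [phi_one_eq_ite_of_degW_le d ξ η hle, if_neg hξ, mul_zero, mul_zero, sub_zero]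
    · rw [ih _ (hn ▸ not_le.1 hle) ξ rfl, sub_self]

end Composition

def polynomialFunctions : Subalgebra ℝ (Series → ℝ) := (AlgHom.pi fun d => evalS d).range

lemma evalS_aw (d : Series) (η : Word) : evalS d (aw η) = d η := by
  simp [evalS, aw]

lemma coeff_mem_polynomialFunctions (w : Word) : (fun d : Series => d w) ∈ polynomialFunctions :=
  ⟨aw w, funext fun d => evalS_aw d w⟩

lemma shuffleFn_mem_polynomialFunctions : ∀ (w : Word) (c e : Series → Series),
    (∀ v, (fun d => c d v) ∈ polynomialFunctions) → (∀ v, (fun d => e d v) ∈ polynomialFunctions) →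
    (fun d => shuffleFn (c d) (e d) w) ∈ polynomialFunctions
  | [], _, _, hc, he => mul_mem (hc []) (he [])
  | i :: w, c, e, hc, he =>
      add_mem (shuffleFn_mem_polynomialFunctions w (fun d => lshift i (c d)) e
          (fun v => hc (i :: v)) he)
        (shuffleFn_mem_polynomialFunctions w c (fun d => lshift i (e d)) hc
          fun v => he (i :: v))

lemma phi_one_mem_polynomialFunctions : ∀ (ξ w : Word),
    (fun d => phi d ξ one w) ∈ polynomialFunctions
  | [], w => polynomialFunctions.algebraMap_mem (one w)
  | _ :: _, [] => by simp only [phi_cons_nil]; exact zero_mem _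
  | 0 :: ξ, 0 :: w => by simpa using phi_one_mem_polynomialFunctions ξ w
  | 0 :: ξ, 1 :: w => by simp only [phi_zero_cons_one]; exact zero_mem _
  | 1 :: ξ, 0 :: w => by
      simpa using shuffleFn_mem_polynomialFunctions w id (fun d => phi d ξ one)
        coeff_mem_polynomialFunctions (phi_one_mem_polynomialFunctions ξ)
  | 1 :: ξ, 1 :: w => by simpa using phi_one_mem_polynomialFunctions ξ w

lemma evalPair_tmul (c d : Series) (p q : H) :
    evalPair c d (p ⊗ₜ q) = evalS c p * evalS d q := rfl

lemma aeval_tensorEquivSum (x : Word ⊕ Word → ℝ) (t : H ⊗[ℝ] H) :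
    MvPolynomial.aeval x (MvPolynomial.tensorEquivSum ℝ Word Word ℝ t) =
      evalPair (x ∘ Sum.inl) (x ∘ Sum.inr) t := by
  have : (MvPolynomial.aeval x).comp (MvPolynomial.tensorEquivSum ℝ Word Word ℝ).toAlgHom =
      Algebra.TensorProduct.lift (evalS (x ∘ Sum.inl)) (evalS (x ∘ Sum.inr))
        fun _ _ => .all _ _ := by
    ext i <;> simp [evalS]
  induction t using TensorProduct.induction_on with
  | zero => simp
  | tmul p q => simpa [evalPair_tmul] using congr($this (p ⊗ₜ q))
  | add t t' ht ht' => simp only [map_add, ht, ht']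

lemma ext_evalPair {t t' : H ⊗[ℝ] H} (h : ∀ c d, evalPair c d t = evalPair c d t') : t = t' :=
  (MvPolynomial.tensorEquivSum ℝ Word Word ℝ).injective <| MvPolynomial.funext fun x => by
    have := h (x ∘ Sum.inl) (x ∘ Sum.inr)
    rwa [← aeval_tensorEquivSum, ← aeval_tensorEquivSum] at this

lemma exists_coproduct_aw_eq {Δ : H →ₐ[ℝ] H ⊗[ℝ] H} (hΔ : IsFBCoproduct Δ) (η : Word) :
    ∃ Q : Word → H, (∀ ξ d, evalS d (Q ξ) = phi d ξ one η) ∧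
      Δ (aw η) = 1 ⊗ₜ aw η + ∑ ξ ∈ wordsUpTo η.length, aw ξ ⊗ₜ Q ξ := by
  choose Q hQ using fun ξ => phi_one_mem_polynomialFunctions ξ η
  have hQ' : ∀ ξ d, evalS d (Q ξ) = phi d ξ one η := fun ξ d => congrFun (hQ ξ) d
  refine ⟨Q, hQ', ext_evalPair fun c d => ?_⟩
  simp only [hΔ η c d, map_add, map_sum, evalPair_tmul, evalS_aw, hQ', map_one, one_mul,
    mcomp_eq_sum d c le_rfl (w := η)]
  ring

lemma antipode_one {Δ : H →ₐ[ℝ] H ⊗[ℝ] H} {S : H →ₗ[ℝ] H}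
    (hS : ∀ p, LinearMap.mul' ℝ H (map S LinearMap.id (Δ p)) = counit p • 1) : S 1 = 1 := by
  simpa [Algebra.TensorProduct.one_def] using hS 1

lemma mcomp_antipode_eval {Δ : H →ₐ[ℝ] H ⊗[ℝ] H} (hΔ : IsFBCoproduct Δ) {S : H →ₗ[ℝ] H}
    (hS : ∀ p, LinearMap.mul' ℝ H (map S LinearMap.id (Δ p)) = counit p • 1) (d : Series) :
    mcomp (fun ξ => evalS d (S (aw ξ))) d = -d := by
  funext η
  obtain ⟨Q, hQ, hΔη⟩ := exists_coproduct_aw_eq hΔ η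
  have h := congr(evalS d $(hS (aw η)))
  simp only [hΔη, counit, evalS_aw, Pi.zero_apply, zero_smul, map_zero, map_add, map_sum,
    map_tmul, LinearMap.mul'_apply, LinearMap.id_apply, antipode_one hS, one_mul, map_mul,
    hQ] at h
  rw [mcomp_eq_sum d _ le_rfl, Pi.neg_apply, eq_neg_iff_add_eq_zero, add_comm, h]

/-- `Σₙ (θ̃₁ⁿ p)(d) x1ⁿ`. -/
def thetaSeries (d : Series) (p : H) : Series := fun w =>
  if (0 : Fin 2) ∈ w then 0 else evalS d ((⇑(thetaR 1))^[w.length] p)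

/-- `Σ_ξ (-1)^|ξ| (Θ̂′_ξ p)(d) ξ`. -/
def thetaHatSeries (d : Series) (p : H) : Series := fun ξ =>
  (-1) ^ ξ.length * evalS d (thetaHatWord ξ p)

lemma thetaR_aw (i : Fin 2) (ν : Word) : thetaR i (aw ν) = aw (ν ++ [i]) :=
  MvPolynomial.mkDerivation_X ℝ _ ν

lemma thetaR_one_iterate_aw (n : ℕ) (ν : Word) :
    (⇑(thetaR 1))^[n] (aw ν) = aw (ν ++ List.replicate n 1) := by
  induction n with
  | zero => simp
  | succ n ih =>
    rw [Function.iterate_succ_apply', ih, thetaR_aw, List.replicate_succ', List.append_assoc]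

lemma eq_replicate_one_of_zero_notMem {w : Word} (h : (0 : Fin 2) ∉ w) :
    w = List.replicate w.length 1 :=
  List.eq_replicate_length.2 fun i hi => by
    match i with
    | 0 => exact absurd hi h
    | 1 => rfl

section SupportedOnX1

variable {d : Series}

lemma thetaSeries_cons_zero (p : H) (w : Word) : thetaSeries d p (0 :: w) = 0 :=
  if_pos List.mem_cons_self

lemma thetaSeries_cons_one (p : H) (w : Word) :
    thetaSeries d p (1 :: w) = thetaSeries d (thetaR 1 p) w := by
  simp [thetaSeries, Function.iterate_succ_apply]

lemma thetaSeries_aw_nil (hd : ∀ w, (0 : Fin 2) ∈ w → d w = 0) : thetaSeries d (aw []) = d := by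
  funext w
  by_cases h : (0 : Fin 2) ∈ w
  · rw [thetaSeries, if_pos h, hd w h]
  · rw [thetaSeries, if_neg h, thetaR_one_iterate_aw, List.nil_append, evalS_aw,
      ← eq_replicate_one_of_zero_notMem h]

lemma thetaSeries_mul_aw_nil (hd : ∀ w, (0 : Fin 2) ∈ w → d w = 0) (p : H) (w : Word) :
    thetaSeries d (p * aw []) w = shuffleFn d (thetaSeries d p) w := by
  by_cases h : (0 : Fin 2) ∈ w
  · rw [thetaSeries, if_pos h,
      shuffleFn_eq_zero_of_zero_mem w d (thetaSeries d p) hd (fun v hv => if_pos hv) h]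
  · rw [eq_replicate_one_of_zero_notMem h, thetaSeries, if_neg (by simp),
      shuffleFn_replicate_one, List.length_replicate, mul_comm, Derivation.iterate_leibniz,
      map_sum]
    refine sum_congr rfl fun i _ => ?_
    rw [map_nsmul, map_mul, thetaR_one_iterate_aw, List.nil_append, evalS_aw, nsmul_eq_mul,
      thetaSeries, if_neg (by simp), List.length_replicate]

lemma thetaHatSeries_cons (i : Fin 2) (ξ : Word) (p : H) :
    thetaHatSeries d p (i :: ξ) = -thetaHatSeries d (thetaHat i p) ξ := by
  simp [thetaHatSeries, thetaHatWord, pow_succ]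

lemma thetaHatSeries_neg (p : H) : thetaHatSeries d (-p) = -thetaHatSeries d p := by
  funext ξ
  simp [thetaHatSeries]

lemma lshift_one_thetaHatSeries (p : H) :
    lshift 1 (thetaHatSeries d p) = thetaHatSeries d (thetaR 1 p) := by
  funext ξ
  simp [lshift, thetaHatSeries_cons, thetaHat, thetaHatSeries_neg]

lemma lshift_zero_thetaHatSeries (p : H) :
    lshift 0 (thetaHatSeries d p) = -thetaHatSeries d (thetaR 1 p * aw []) := by
  funext ξ
  simp [lshift, thetaHatSeries_cons, thetaHat, kappaE]

lemma mcomp_thetaHatSeries (hd : ∀ w, (0 : Fin 2) ∈ w → d w = 0) :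
    ∀ (w : Word) (p : H), mcomp (thetaHatSeries d p) d w = thetaSeries d p w
  | [], p => by simp [mcomp_nil, thetaHatSeries, thetaSeries, thetaHatWord]
  | 1 :: w, p => by
      rw [mcomp_cons_one, lshift_one_thetaHatSeries, mcomp_thetaHatSeries hd w,
        thetaSeries_cons_one]
  | 0 :: w, p => by
      rw [mcomp_cons_zero, lshift_zero_thetaHatSeries, lshift_one_thetaHatSeries, mcomp_neg_left,
        Pi.neg_apply, mcomp_thetaHatSeries hd w, thetaSeries_mul_aw_nil hd,
        shuffleFn_congr_right d fun v hv => mcomp_thetaHatSeries hd v (thetaR 1 p),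
        neg_add_cancel, thetaSeries_cons_zero]
termination_by w => w.length
decreasing_by
  all_goals simp
  exact hv.length_le

end SupportedOnX1

theorem evalS_antipode_aw {Δ : H →ₐ[ℝ] H ⊗[ℝ] H} (hΔ : IsFBCoproduct Δ) {S : H →ₗ[ℝ] H}
    (hS : ∀ p, LinearMap.mul' ℝ H (map S LinearMap.id (Δ p)) = counit p • 1)
    {d : Series} (hd : ∀ w, (0 : Fin 2) ∈ w → d w = 0) (η : Word) :
    evalS d (S (aw η)) = -((-1) ^ η.length * evalS d (thetaHatWord η (aw []))) := by
  have hsol : mcomp (fun ξ => evalS d (S (aw ξ))) d = mcomp (-thetaHatSeries d (aw [])) d := by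
    rw [mcomp_antipode_eval hΔ hS, mcomp_neg_left,
      funext (mcomp_thetaHatSeries hd · (aw [])), thetaSeries_aw_nil hd]
  exact congrFun (mcomp_left_injective d hsol) η

lemma ferfera_eq_zero_of_zero_mem {w : Word} (h : (0 : Fin 2) ∈ w) : ferfera w = 0 :=
  if_neg fun hw => Fin.zero_ne_one (List.eq_of_mem_replicate (hw ▸ h))

end Paper

open Paper in
/-- Let `c = Σ_{k≥0} k! x1^k` be the Ferfera series.  Then for every
nonempty word `η = x_{i_1} ⋯ x_{i_l} ∈ X*`,
`(S a_η)(−c) = (−1)^{|η|−1} (Θ̂′_η (a_∅))(−c)`, where `θ̂′_1 := −θ̃_1` and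
`θ̂′_0 := κ_∅ ∘ θ̃_1`; in particular the value `(S a_η)(−c)` depends only on coordinate
functions of the form `a_{x1^n}` and `a_∅`. -/
theorem antipode_ferfera_simple_formula
    (Δ : H →ₐ[ℝ] (H ⊗[ℝ] H)) (hΔ : IsFBCoproduct Δ)
    (S : H →ₗ[ℝ] H) (hS : IsAntipode Δ S) :
    ∀ η : Word, η ≠ [] →
      evalS (-ferfera) (S (aw η)) =
        ((-1 : ℝ) ^ (η.length - 1)) * evalS (-ferfera) (thetaHatWord η (aw [])) := by
  intro η hη
  obtain ⟨i, ξ, rfl⟩ := List.exists_cons_of_ne_nil hη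
  rw [evalS_antipode_aw hΔ hS.1 fun w hw => by simp [ferfera_eq_zero_of_zero_mem hw]]
  simp [pow_succ]
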